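/- arXiv:1701.07802 — 6 statements merged into one kernel-verified Lean document; each statement's English description precedes it below -/
import Mathlib

section
/- Let P ∈ C[x,y] with deg_y P = d, and let R(x) = Res_y(P, P_y) be the resultant of P and its y-derivative with respect to y. Suppose α ∈ C̄ (the algebraic closure) is a root of R of multiplicity exactly k. Then the squarefree part S(y) = P(α,y) / gcd(P(α,y), P_y(α,y)) of P(α,y) has degree at least d − k. -/
/-- The Sylvester matrix of `p` (of degree `n`) and `q` (of degree `m`):
an `(m+n)×(m+n)` matrix whose first `m` columns are shifted coefficient
vectors of `p` and last `n` columns shifted coefficient vectors of `q`. -/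
noncomputable def sylvesterMatrix {R : Type*} [CommRing R]
    (p q : Polynomial R) (n m : ℕ) : Matrix (Fin (m + n)) (Fin (m + n)) R :=
  Matrix.of fun i j =>
    if (j : ℕ) < m then
      (if (j : ℕ) ≤ (i : ℕ) then p.coeff ((i : ℕ) - (j : ℕ)) else 0)
    else
      (if (j : ℕ) - m ≤ (i : ℕ) then q.coeff ((i : ℕ) - ((j : ℕ) - m)) else 0)

/-!
Specialising `x = α` turns the Sylvester matrix `M(x)` of `P` and `P_y` into the Sylvester matrix
of `f = P(α, y)` and `f'`. With `g = gcd(f, f')`, `S = f / g` and `T = f' / g` one has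
`S f' = T f` and `deg T < deg S`, so for `j < d - deg S` the coefficient vectors of
`(-T y^j, S y^j)` lie in the kernel of `M(α)`. These vectors are in echelon form with nonzero
pivots, so multiplying `M(x)` by a constant invertible upper triangular matrix makes
`d - deg S` columns vanish at `α`, and `(x - α)^(d - deg S)` divides `R = det M(x)`.
-/

open Polynomial Matrix

theorem Fin.card_filter_le_val (N a : ℕ) :
    (Finset.univ.filter fun t : Fin N => a ≤ (t : ℕ)).card = N - a := by
  have hlt := Fin.card_filter_val_lt (n := N) (m := a)
  have hsum := Finset.card_filter_add_card_filter_not (s := Finset.univ) (fun t : Fin N => a ≤ t)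
  simp only [not_le, Finset.card_univ, Fintype.card_fin] at hsum
  omega

theorem EuclideanDomain.div_gcd_mul_comm {R : Type*} [EuclideanDomain R] [DecidableEq R]
    (a b : R) : a / gcd a b * b = b / gcd a b * a := by
  by_cases hg : gcd a b = 0
  · obtain ⟨rfl, rfl⟩ := EuclideanDomain.gcd_eq_zero_iff.1 hg
    rfl
  calc a / gcd a b * b = a / gcd a b * (gcd a b * (b / gcd a b)) := by
        rw [EuclideanDomain.mul_div_cancel' hg (gcd_dvd_right a b)]
    _ = gcd a b * (a / gcd a b) * (b / gcd a b) := by ring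
    _ = b / gcd a b * a := by rw [EuclideanDomain.mul_div_cancel' hg (gcd_dvd_left a b), mul_comm]

section

variable {A : Type*} [CommRing A]

theorem Polynomial.coeff_mul_eq_sum_fin {u : A[X]} {m : ℕ} (hu : u.degree < m) (p : A[X])
    (i : ℕ) : (u * p).coeff i = ∑ t : Fin m, u.coeff t * (X ^ (t : ℕ) * p).coeff i := by
  refine Eq.trans ?_ (sum_fin (fun t a => a * (X ^ t * p).coeff i) (fun _ => zero_mul _) hu).symm
  conv_lhs => rw [← u.sum_C_mul_X_pow_eq]
  simp only [Polynomial.sum, Finset.sum_mul, finsetSum_coeff, mul_assoc, coeff_C_mul]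

theorem pow_card_dvd_det_of_isRoot {ι : Type*} [Fintype ι] [DecidableEq ι]
    (M : Matrix ι ι A[X]) (a : A) (J : Finset ι) (h : ∀ i, ∀ t ∈ J, (M i t).IsRoot a) :
    (X - C a) ^ J.card ∣ M.det := by
  set N : Matrix ι ι A[X] := .of fun i t => if t ∈ J then M i t /ₘ (X - C a) else M i t
  have hM : M = N * Matrix.diagonal fun t => if t ∈ J then X - C a else 1 := by
    ext i t
    by_cases ht : t ∈ J
    · simp [N, ht, mul_comm, mul_divByMonic_eq_iff_isRoot.2 (h i t ht)]
    · simp [N, ht]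
  rw [hM, Matrix.det_mul, Matrix.det_diagonal, Finset.prod_ite_mem, Finset.univ_inter,
    Finset.prod_const]
  exact dvd_mul_left _ _

theorem sylvesterMatrix_map {B : Type*} [CommRing B] (φ : A →+* B) (p q : A[X]) (n m : ℕ) :
    (sylvesterMatrix p q n m).map φ = sylvesterMatrix (p.map φ) (q.map φ) n m := by
  ext i j
  simp only [sylvesterMatrix, Matrix.map_apply, Matrix.of_apply, coeff_map]
  split_ifs <;> simp

noncomputable def coeffAppend (u v : A[X]) (m n : ℕ) : Fin (m + n) → A :=
  fun t => if (t : ℕ) < m then u.coeff t else v.coeff (t - m)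

theorem sylvesterMatrix_mulVec_coeffAppend (p q : A[X]) {u v : A[X]} {n m : ℕ}
    (hu : u.degree < m) (hv : v.degree < n) :
    sylvesterMatrix p q n m *ᵥ coeffAppend u v m n =
      (fun i : Fin (m + n) => (u * p + v * q).coeff i) := by
  ext i
  simp only [Matrix.mulVec, dotProduct, Fin.sum_univ_add, coeff_add,
    coeff_mul_eq_sum_fin hu, coeff_mul_eq_sum_fin hv, coeff_X_pow_mul']
  congr 1 <;> refine Finset.sum_congr rfl fun t _ => ?_
  · simp only [sylvesterMatrix, coeffAppend, Matrix.of_apply, Fin.val_castAdd, t.isLt, if_true]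
    exact mul_comm _ _
  · simp only [sylvesterMatrix, coeffAppend, Matrix.of_apply, Fin.val_natAdd,
      Nat.add_sub_cancel_left, add_lt_iff_neg_left, Nat.not_lt_zero, if_false]
    exact mul_comm _ _

theorem sylvesterMatrix_mulVec_coeffAppend_eq_zero {p q S T : A[X]}
    (hST : S * q = T * p) {n m j : ℕ} (hT : (T * X ^ j).degree < (m : WithBot ℕ))
    (hS : (S * X ^ j).degree < (n : WithBot ℕ)) :
    sylvesterMatrix p q n m *ᵥ coeffAppend (-(T * X ^ j)) (S * X ^ j) m n = 0 := by
  rw [sylvesterMatrix_mulVec_coeffAppend p q (by rwa [degree_neg]) hS]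
  ext i
  rw [show -(T * X ^ j) * p + S * X ^ j * q = 0 by linear_combination X ^ j * hST]
  simp

end

theorem Polynomial.degree_derivative_div_gcd_lt {K : Type*} [Field K] [DecidableEq K] {f : K[X]}
    (hf : f ≠ 0) :
    (derivative f / EuclideanDomain.gcd f (derivative f)).degree
      < (f / EuclideanDomain.gcd f (derivative f)).degree := by
  set g := EuclideanDomain.gcd f (derivative f)
  have hg : g ≠ 0 := fun h => hf (EuclideanDomain.gcd_eq_zero_iff.1 h).1
  have hlt : (g * (derivative f / g)).degree < (g * (f / g)).degree := by
    rw [EuclideanDomain.mul_div_cancel' hg (EuclideanDomain.gcd_dvd_right _ _),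
      EuclideanDomain.mul_div_cancel' hg (EuclideanDomain.gcd_dvd_left _ _)]
    exact degree_derivative_lt hf
  rw [degree_mul, degree_mul] at hlt
  exact lt_of_add_lt_add_left hlt

theorem pow_card_dvd_det_of_mulVec_eval_eq_zero {ι K : Type*} [Fintype ι] [LinearOrder ι]
    [Field K] (M : Matrix ι ι K[X]) (a : K) (J : Finset ι) (w : ι → ι → K)
    (hker : ∀ t ∈ J, M.map (eval a) *ᵥ w t = 0) (htri : ∀ t ∈ J, ∀ i, t < i → w t i = 0)
    (hpiv : ∀ t ∈ J, w t t ≠ 0) :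
    (X - C a) ^ J.card ∣ M.det := by
  -- `B` is `1` with column `t ∈ J` replaced by `w t`: invertible, and the columns `J` of `M * B`
  -- vanish at `a`
  set B : Matrix ι ι K := .of fun i t => if t ∈ J then w t i else (1 : Matrix ι ι K) i t
  have hB : B.IsUpperTriangular := by
    intro i t hti
    by_cases ht : t ∈ J
    · simp [B, ht, htri t ht i hti]
    · simpa [B, ht] using Matrix.one_apply_ne (ne_of_gt (show t < i from hti))
  have hBdet : IsUnit B.det := by
    rw [isUnit_iff_ne_zero, Matrix.det_of_isUpperTriangular hB, Finset.prod_ne_zero_iff]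
    intro t _
    by_cases ht : t ∈ J
    · simpa [B, ht] using hpiv t ht
    · simp [B, ht]
  have hroot : ∀ i, ∀ t ∈ J, ((M * B.map C) i t).IsRoot a := by
    intro i t ht
    have := congrFun (hker t ht) i
    simpa [IsRoot, Matrix.mul_apply, Matrix.mulVec, dotProduct, eval_finsetSum, B, ht] using this
  have := pow_card_dvd_det_of_isRoot _ a J hroot
  rwa [Matrix.det_mul, ← RingHom.mapMatrix_apply, ← RingHom.map_det,
    (hBdet.map C).dvd_mul_right] at this

theorem card_le_rootMultiplicity_det {ι K : Type*} [Fintype ι] [LinearOrder ι]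
    [Field K] {M : Matrix ι ι K[X]} (hM : M.det ≠ 0) (a : K) (J : Finset ι) (w : ι → ι → K)
    (hker : ∀ t ∈ J, M.map (eval a) *ᵥ w t = 0) (htri : ∀ t ∈ J, ∀ i, t < i → w t i = 0)
    (hpiv : ∀ t ∈ J, w t t ≠ 0) :
    J.card ≤ M.det.rootMultiplicity a :=
  (le_rootMultiplicity_iff hM).2 (pow_card_dvd_det_of_mulVec_eval_eq_zero M a J w hker htri hpiv)

theorem sub_natDegree_le_rootMultiplicity_det_of_sylvester {K : Type*} [Field K] {n : ℕ}
    {M : Matrix (Fin (n - 1 + n)) (Fin (n - 1 + n)) K[X]} (hM : M.det ≠ 0) (a : K)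
    {p q S T : K[X]} (hMa : M.map (eval a) = sylvesterMatrix p q n (n - 1))
    (hST : S * q = T * p) (hdeg : T.degree < S.degree) :
    n - S.natDegree ≤ M.det.rootMultiplicity a := by
  have hS : S ≠ 0 := ne_zero_of_degree_gt hdeg
  set s := S.natDegree
  let w (t : Fin (n - 1 + n)) : Fin (n - 1 + n) → K :=
    coeffAppend (-(T * X ^ ((t : ℕ) - (n - 1 + s)))) (S * X ^ ((t : ℕ) - (n - 1 + s))) (n - 1) n
  refine (show n - s ≤ n - 1 + n - (n - 1 + s) by omega).trans ?_
  rw [← Fin.card_filter_le_val]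
  refine card_le_rootMultiplicity_det hM a _ w ?_ ?_ ?_ <;>
    intro t ht <;> simp only [Finset.mem_filter_univ] at ht <;>
    set j := (t : ℕ) - (n - 1 + s)
  · have hSj : (S * X ^ j).degree = ((s + j : ℕ) : WithBot ℕ) := by
      rw [degree_mul_X_pow, degree_eq_natDegree hS]; rfl
    have hTj : (T * X ^ j).degree < ((n - 1 : ℕ) : WithBot ℕ) := calc
      (T * X ^ j).degree < (S * X ^ j).degree := by
        rw [degree_mul_X_pow, degree_mul_X_pow]; exact WithBot.add_lt_add_right (by simp) hdeg
      _ ≤ ((n - 1 : ℕ) : WithBot ℕ) := by rw [hSj]; exact_mod_cast (by omega : s + j ≤ n - 1)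
    rw [hMa]
    refine sylvesterMatrix_mulVec_coeffAppend_eq_zero hST hTj ?_
    rw [hSj]; exact_mod_cast (by omega : s + j < n)
  · intro i (hti : (t : ℕ) < i)
    have hi : ¬ (i : ℕ) < n - 1 := by omega
    simp only [w, coeffAppend, if_neg hi]
    refine coeff_eq_zero_of_natDegree_lt ?_
    rw [natDegree_mul_X_pow _ hS]
    omega
  · have ht' : ¬ (t : ℕ) < n - 1 := by omega
    simp only [w, coeffAppend, if_neg ht']
    rw [show (t : ℕ) - (n - 1) = s + j by omega, coeff_mul_X_pow]
    exact leadingCoeff_ne_zero.2 hS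

theorem stmt4_general {C K : Type*} [Field C] [Field K] [DecidableEq K]
    [Algebra C K]
    (P : Polynomial (Polynomial C)) (d : ℕ)
    (R : Polynomial C)
    (hR : R = (sylvesterMatrix P (Polynomial.derivative P) d (d - 1)).det)
    (hR0 : R ≠ 0)
    (α : K) (k : ℕ)
    (hk : (R.map (algebraMap C K)).rootMultiplicity α = k) :
    d - k ≤ ((P.map ((Polynomial.aeval α).toRingHom : Polynomial C →+* K)) /
      EuclideanDomain.gcd (P.map ((Polynomial.aeval α).toRingHom : Polynomial C →+* K))
        (Polynomial.derivative
          (P.map ((Polynomial.aeval α).toRingHom : Polynomial C →+* K)))).natDegree := by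
  set ψ : C[X] →+* K := (aeval α).toRingHom
  set f := P.map ψ
  set M := (sylvesterMatrix P (derivative P) d (d - 1)).map (mapRingHom (algebraMap C K))
  have hdet : M.det = R.map (algebraMap C K) := by rw [hR]; exact (RingHom.map_det _ _).symm
  have hdet0 : M.det ≠ 0 := hdet ▸ Polynomial.map_ne_zero hR0
  have hMα : M.map (eval α) = sylvesterMatrix f (derivative f) d (d - 1) := by
    have hψ : eval α ∘ mapRingHom (algebraMap C K) = ψ := funext fun r => eval_map_algebraMap r α
    rw [Matrix.map_map, hψ, sylvesterMatrix_map, derivative_map]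
  rw [← hk, ← hdet]
  by_cases hf : f = 0
  · -- here `f / gcd f f'` is the junk value `0 / 0 = 0`; the pair `S = 1`, `T = 0` still works
    have := sub_natDegree_le_rootMultiplicity_det_of_sylvester hdet0 α hMα (S := 1) (T := 0)
      (by simp [hf]) (by simp)
    rw [natDegree_one] at this
    omega
  · have := sub_natDegree_le_rootMultiplicity_det_of_sylvester hdet0 α hMα
      (EuclideanDomain.div_gcd_mul_comm f (derivative f)) (degree_derivative_div_gcd_lt hf)
    omega

/-- If `P ∈ C[x,y]` has `deg_y P = d`, `R(x) = Res_y(P, P_y)`, and `α` in the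
algebraic closure is a root of `R` of multiplicity exactly `k`, then the
squarefree part `S(y) = P(α,y)/gcd(P(α,y), P_y(α,y))` of `P(α,y)` has degree
at least `d - k`. -/
theorem stmt4 {C K : Type*} [Field C] [CharZero C] [Field K] [DecidableEq K] [IsAlgClosed K]
    [Algebra C K]
    (P : Polynomial (Polynomial C)) (d : ℕ)
    (hd : P.natDegree = d) (hd1 : 1 ≤ d)
    (R : Polynomial C)
    (hR : R = (sylvesterMatrix P (Polynomial.derivative P) d (d - 1)).det)
    (hR0 : R ≠ 0)
    (α : K) (k : ℕ)
    (hroot : Polynomial.aeval α R = 0)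
    (hk : (R.map (algebraMap C K)).rootMultiplicity α = k) :
    d - k ≤ ((P.map ((Polynomial.aeval α).toRingHom : Polynomial C →+* K)) /
      EuclideanDomain.gcd (P.map ((Polynomial.aeval α).toRingHom : Polynomial C →+* K))
        (Polynomial.derivative
          (P.map ((Polynomial.aeval α).toRingHom : Polynomial C →+* K)))).natDegree :=
  stmt4_general P d R hR hR0 α k hk
end

section
/- Let M(x) be a square matrix of size n whose entries are polynomials in C[x], let R(x) = det M(x), and suppose α is a root of R of multiplicity k (i.e., R vanishes to order exactly k at α). Then the corank of the scalar matrix M(α) is at most k. -/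
open Polynomial Matrix Module

/-- If `p` divides every entry of `d` columns of `N`, then `p^d` divides `det N`. -/
lemma pow_dvd_det {R : Type*} [CommRing R] {n : ℕ} (N : Matrix (Fin n) (Fin n) R)
    (p : R) (S : Finset (Fin n)) (h : ∀ j ∈ S, ∀ i, p ∣ N i j) :
    p ^ S.card ∣ N.det := by
  rw [Matrix.det_apply']
  apply Finset.dvd_sum
  intro σ _
  apply Dvd.dvd.mul_left
  calc p ^ S.card = ∏ j ∈ S, p := by rw [Finset.prod_const]
    _ ∣ ∏ j ∈ S, N (σ j) j := Finset.prod_dvd_prod_of_dvd _ _ (fun j hj => h j hj (σ j))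
    _ ∣ ∏ j, N (σ j) j := Finset.prod_dvd_prod_of_subset _ _ _ (Finset.subset_univ S)

/-- If `M(x)` is an `n×n` matrix of polynomials, `R = det M` is nonzero, and
`α` is a root of `R` of multiplicity `k`, then the corank of the scalar matrix
`M(α)` is at most `k`. -/
theorem stmt5 {C : Type*} [Field C] [CharZero C] (n : ℕ)
    (M : Matrix (Fin n) (Fin n) (Polynomial C)) (R : Polynomial C)
    (hR : R = M.det) (hR0 : R ≠ 0) (α : C) (k : ℕ)
    (hk : Polynomial.rootMultiplicity α R = k) :
    n - (M.map (Polynomial.eval α)).rank ≤ k := by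
  classical
  set A : Matrix (Fin n) (Fin n) C := M.map (Polynomial.eval α) with hA
  set W : Submodule C (Fin n → C) := LinearMap.ker A.mulVecLin with hW
  set d : ℕ := finrank C W with hd
  -- rank-nullity
  have hrn : A.rank + d = n := by
    have := LinearMap.finrank_range_add_finrank_ker A.mulVecLin
    simpa [Matrix.rank, Module.finrank_fin_fun] using this
  -- construct a basis whose first `d` vectors lie in `W`
  obtain ⟨W', hW'⟩ := Submodule.exists_isCompl W
  have hsum : d + finrank C W' = n := by
    have := Submodule.finrank_add_eq_of_isCompl hW'
    simpa [Module.finrank_fin_fun] using this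
  let bW := Module.finBasis C W
  let bW' := Module.finBasis C W'
  let e : Fin d ⊕ Fin (finrank C W') ≃ Fin n := finSumFinEquiv.trans (finCongr hsum)
  let b : Basis (Fin n) C (Fin n → C) :=
    ((bW.prod bW').map (Submodule.prodEquivOfIsCompl W W' hW')).reindex e
  have hbW : ∀ i : Fin d, b (e (Sum.inl i)) ∈ W := by
    intro i
    simp only [b, Basis.reindex_apply, Equiv.symm_apply_apply, Basis.map_apply,
      Basis.prod_apply]
    simp [Submodule.coe_prodEquivOfIsCompl]
  have hbker : ∀ i : Fin d, A.mulVec (b (e (Sum.inl i))) = 0 := by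
    intro i
    have := hbW i
    rw [hW, LinearMap.mem_ker] at this
    simpa [Matrix.mulVecLin_apply] using this
  -- the change-of-basis matrix
  let P : Matrix (Fin n) (Fin n) C := Matrix.of fun i j => b j i
  have hPdet : P.det ≠ 0 := by
    have h1 : P = (Pi.basisFun C (Fin n)).toMatrix b := by
      ext i j
      simp [P, Basis.toMatrix_apply]
    have h2 := ((Pi.basisFun C (Fin n)).isUnit_det b)
    rw [Basis.det_apply, ← h1] at h2
    exact h2.ne_zero
  -- the product matrix over C[x]
  let N : Matrix (Fin n) (Fin n) (Polynomial C) := M * P.map Polynomial.C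
  let S : Finset (Fin n) := Finset.image (fun i => e (Sum.inl i)) Finset.univ
  have hScard : S.card = d := by
    rw [Finset.card_image_of_injective _ (fun i j h => Sum.inl_injective (e.injective h))]
    simp
  have hcols : ∀ j ∈ S, ∀ i, (X - Polynomial.C α) ∣ N i j := by
    intro j hj i
    obtain ⟨l, _, rfl⟩ := Finset.mem_image.mp hj
    rw [dvd_iff_isRoot, IsRoot]
    have : Polynomial.eval α (N i (e (Sum.inl l))) = A.mulVec (b (e (Sum.inl l))) i := by
      simp [N, Matrix.mul_apply, Matrix.mulVec, dotProduct, hA, P, Polynomial.eval_finset_sum]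
    rw [this, hbker l]
    rfl
  have hdvdN : (X - Polynomial.C α) ^ d ∣ N.det := by
    rw [← hScard]; exact pow_dvd_det N _ S hcols
  have hdvdR : (X - Polynomial.C α) ^ d ∣ R := by
    have hNdet : N.det = M.det * Polynomial.C P.det := by
      rw [Matrix.det_mul, RingHom.map_det, RingHom.mapMatrix_apply]
    rw [hNdet, ← hR] at hdvdN
    exact ((Polynomial.isUnit_C.mpr (isUnit_iff_ne_zero.mpr hPdet)).dvd_mul_right).mp hdvdN
  have hdk : d ≤ k := by
    rw [← hk]
    exact (Polynomial.le_rootMultiplicity_iff hR0).mpr hdvdR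
  omega
end

section
/- Let P ∈ C[x,y] with deg_y P = r_P and deg_x P = d_P, and let R(x) = Res_y(P, P_y). If α is a root of R of multiplicity k, then the equation P(α, y) = 0 has at least r_P − 2k simple roots in C̄, and consequently P(x, g(x)) = 0 has at least r_P − 2k solutions g in the formal power series ring C̄[[x − α]]. -/
/-!
At `x = α` the Sylvester matrix of `P` and `P_y` specialises to that of `Q = P(α, y)` and `Q'`.
If its kernel has dimension `t`, a change of basis makes `t` columns of the Sylvester matrix over
`C̄[x]` vanish at `α`, so `(x - α)^t` divides the resultant and `t ≤ k`. In characteristic zero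
`G = ∏ (y - β)^(m_β - 1)` divides both `Q` and `Q'`; from `Q = G B`, `Q' = G A` the pairs
`(-F A, F B)` with `deg F < r_P - s`, where `s = deg B` is the number of distinct roots of `Q`,
lie in that kernel, so `r_P - s ≤ k`. Counting with multiplicity, `Q` has at least
`2 s - deg Q ≥ r_P - 2k` simple roots, and each of them lifts to a root in `C̄[[x - α]]` by
Newton iteration.
-/

open Polynomial Module

-- `Polynomial.sylvester` takes the two polynomials in the other order and cuts each column off at
-- the nominal degree; under the degree bounds the cut-off is invisible.
theorem sylvesterMatrix_eq_sylvester {R : Type*} [CommRing R] {p q : R[X]} {n m : ℕ}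
    (hp : p.natDegree ≤ n) (hq : q.natDegree ≤ m) :
    sylvesterMatrix p q n m = sylvester q p m n := by
  ext i j
  induction j using Fin.addCases with
  | left j =>
    simp only [sylvesterMatrix, sylvester, Matrix.of_apply, Fin.addCases_left, Fin.val_castAdd,
      j.isLt, if_true, Set.mem_Icc]
    split_ifs with h₁ h₂ <;> try rfl
    · exact coeff_eq_zero_of_natDegree_lt (by omega)
    · omega
  | right j =>
    simp only [sylvesterMatrix, sylvester, Matrix.of_apply, Fin.addCases_right, Fin.val_natAdd,
      Set.mem_Icc, add_tsub_cancel_left, show ¬ m + (j : ℕ) < m by omega, if_false]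
    split_ifs with h₁ h₂ <;> try rfl
    · exact coeff_eq_zero_of_natDegree_lt (by omega)
    · omega

namespace Matrix

variable {n : Type*} [Fintype n] [DecidableEq n]

theorem X_sub_C_pow_card_dvd_det {R : Type*} [CommRing R] {M : Matrix n n R[X]} {a : R}
    (s : Finset n) (hs : ∀ i, ∀ j ∈ s, (M i j).IsRoot a) : (X - C a) ^ s.card ∣ M.det := by
  induction s using Finset.induction_on generalizing M with
  | empty => simp
  | insert j s hj ih =>
    have hM : M = M.updateCol j ((X - C a) • fun i => M i j /ₘ (X - C a)) := by
      ext i l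
      rcases eq_or_ne l j with rfl | hl
      · simp [mul_divByMonic_eq_iff_isRoot.2 (hs i l (Finset.mem_insert_self l s))]
      · simp [hl]
    rw [hM, det_updateCol_smul, Finset.card_insert_of_notMem hj, pow_succ']
    refine mul_dvd_mul_left _ (ih fun i l hl => ?_)
    rw [updateCol_ne (ne_of_mem_of_not_mem hl hj)]
    exact hs i l (Finset.mem_insert_of_mem hl)

theorem X_sub_C_pow_finrank_ker_dvd_det {F : Type*} [Field F] (M : Matrix n n F[X]) (a : F) :
    (X - C a) ^ finrank F (LinearMap.ker (M.map (eval a)).mulVecLin) ∣ M.det := by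
  set W := LinearMap.ker (M.map (eval a)).mulVecLin
  obtain ⟨W', hW⟩ := W.exists_isCompl
  let b := ((finBasis F W).prod (finBasis F W')).map (W.prodEquivOfIsCompl W' hW)
  let e := b.indexEquiv (Pi.basisFun F n)
  let U : Matrix n n F := (Pi.basisFun F n).toMatrix (b.reindex e)
  have hU : IsUnit (U.map C).det := by
    rw [← RingHom.mapMatrix_apply, ← RingHom.map_det]
    exact ((Pi.basisFun F n).isUnit_det (b.reindex e)).map C
  have hker : ∀ j, ∀ i, (M.map (eval a) * U) i (e (Sum.inl j)) = 0 := by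
    intro j i
    have : (M.map (eval a)).mulVecLin (b (Sum.inl j)) = 0 := by simp [b, W]
    simpa [U, mul_apply, mulVec, dotProduct, Basis.toMatrix_apply] using congrFun this i
  have hdvd := X_sub_C_pow_card_dvd_det (M := M * U.map C) (a := a)
    (Finset.univ.map ((Function.Embedding.inl).trans e.toEmbedding)) fun i j hj => by
      obtain ⟨j, -, rfl⟩ := Finset.mem_map.1 hj
      have := hker j i
      simp only [mul_apply, map_apply] at this
      simpa [IsRoot, mul_apply, eval_finsetSum] using this
  rw [det_mul, Finset.card_map, Finset.card_univ, Fintype.card_fin] at hdvd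
  exact (IsUnit.dvd_mul_right hU).1 hdvd

theorem finrank_ker_map_aeval_le_rootMultiplicity {C K : Type*} [Field C] [Field K] [Algebra C K]
    (N : Matrix n n C[X]) (α : K) (hN : N.det ≠ 0) :
    finrank K (LinearMap.ker (N.map (aeval α)).mulVecLin) ≤
      (N.det.map (algebraMap C K)).rootMultiplicity α := by
  set M := (mapRingHom (algebraMap C K)).mapMatrix N with hM
  have hMdet : M.det = N.det.map (algebraMap C K) := (RingHom.map_det _ N).symm
  have hMeval : M.map (eval α) = N.map (aeval α) := by
    rw [hM, RingHom.mapMatrix_apply, Matrix.map_map]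
    congr 1
    ext p
    exact eval_map_algebraMap p α
  rw [← hMeval, ← hMdet]
  refine (le_rootMultiplicity_iff ?_).2 (M.X_sub_C_pow_finrank_ker_dvd_det α)
  rw [hMdet]
  exact (Polynomial.map_ne_zero_iff (algebraMap C K).injective).2 hN

end Matrix

namespace Polynomial

variable {K : Type*} [Field K]

theorem mul_mem_degreeLT {A F : K[X]} {t m : ℕ} (hA : A.degree + t ≤ m)
    (hF : F ∈ degreeLT K t) :
    F * A ∈ degreeLT K m := by
  rw [mem_degreeLT] at hF ⊢
  rcases eq_or_ne A 0 with rfl | hA0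
  · simp
  rw [degree_mul]
  exact (WithBot.add_lt_add_right (degree_ne_bot.2 hA0) hF).trans_le (by rwa [add_comm])

theorem le_finrank_ker_sylvester {f g A B : K[X]} {m n t : ℕ} (hf : f.natDegree ≤ m)
    (hg : g.natDegree ≤ n) (hAB : f * B + g * A = 0) (hB : B ≠ 0) (hA : A.degree + t ≤ m)
    (hBt : B.degree + t ≤ n) :
    t ≤ finrank K (LinearMap.ker (sylvester f g m n).mulVecLin) := by
  let ψ : K[X]_t →ₗ[K] K[X]_m × K[X]_n :=
    ((LinearMap.mulRight K A).restrict fun _ hF => mul_mem_degreeLT hA hF).prod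
      ((LinearMap.mulRight K B).restrict fun _ hF => mul_mem_degreeLT hBt hF)
  have hψ₁ (F : K[X]_t) : ((ψ F).1 : K[X]) = F * A := rfl
  have hψ₂ (F : K[X]_t) : ((ψ F).2 : K[X]) = F * B := rfl
  let b := ((degreeLT.basis K m).prod (degreeLT.basis K n)).reindex finSumFinEquiv
  have hker (F : K[X]_t) : b.equivFun (ψ F) ∈ LinearMap.ker (sylvester f g m n).mulVecLin := by
    have : sylvesterMap f g hf hg (ψ F) = 0 := by
      ext1
      rw [sylvesterMap_apply_coe, hψ₁, hψ₂, ZeroMemClass.coe_zero]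
      linear_combination (F : K[X]) * hAB
    rw [LinearMap.mem_ker, Matrix.mulVecLin_apply, ← toMatrix_sylvesterMap' f g hf hg,
      Basis.equivFun_apply, LinearMap.toMatrix_mulVec_repr, this, map_zero, Finsupp.coe_zero]
  have hinj : Function.Injective ((b.equivFun.toLinearMap ∘ₗ ψ).codRestrict _ hker) := by
    intro F F' h
    have h₂ := congrArg (fun x => ((b.equivFun.symm x.1).2 : K[X])) h
    simp only [LinearMap.codRestrict_apply, LinearMap.comp_apply, LinearEquiv.coe_coe,
      LinearEquiv.symm_apply_apply, hψ₂] at h₂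
    exact Subtype.ext (mul_right_cancel₀ hB h₂)
  calc t = finrank K K[X]_t := by simp [finrank_eq_card_basis (degreeLT.basis K t)]
    _ ≤ _ := LinearMap.finrank_le_finrank_of_injective hinj

section SimpleRoots

variable {R : Type*} [CommRing R] [IsDomain R]

def simpleRootSet (p : R[X]) : Set R :=
  {x | p.eval x = 0 ∧ p.derivative.eval x ≠ 0}

theorem simpleRootSet_eq_filter [DecidableEq R] {p : R[X]} (hp : p ≠ 0) :
    simpleRootSet p = ↑{x ∈ p.roots.toFinset | p.rootMultiplicity x = 1} := by
  ext x
  have hlt := one_lt_rootMultiplicity_iff_isRoot (t := x) hp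
  have hpos := rootMultiplicity_pos hp (x := x)
  simp only [IsRoot.def] at hlt hpos
  simp only [simpleRootSet, Set.mem_ofPred_eq, Finset.coe_filter, Multiset.mem_toFinset,
    mem_roots hp, IsRoot.def]
  constructor
  · rintro ⟨h₀, h₁⟩
    have := hpos.2 h₀
    have := mt hlt.1 fun h => h₁ h.2
    exact ⟨h₀, by omega⟩
  · rintro ⟨h₀, h₁⟩
    exact ⟨h₀, fun h => by have := hlt.2 ⟨h₀, h⟩; omega⟩

theorem simpleRootSet_finite (p : R[X]) : (simpleRootSet p).Finite := by
  classical
  rcases eq_or_ne p 0 with rfl | hp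
  · simp [simpleRootSet]
  · rw [simpleRootSet_eq_filter hp]
    exact Finset.finite_toSet _

theorem two_mul_card_roots_toFinset_le [DecidableEq R] (p : R[X]) :
    2 * p.roots.toFinset.card ≤ (simpleRootSet p).ncard + p.natDegree := by
  rcases eq_or_ne p 0 with rfl | hp
  · simp
  rw [simpleRootSet_eq_filter hp, Set.ncard_coe_finset, Finset.card_filter]
  calc 2 * p.roots.toFinset.card = ∑ _x ∈ p.roots.toFinset, 2 := by simp [mul_comm]
    _ ≤ ∑ x ∈ p.roots.toFinset,
          ((if p.rootMultiplicity x = 1 then 1 else 0) + p.roots.count x) := by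
      refine Finset.sum_le_sum fun x hx => ?_
      have : 1 ≤ p.roots.count x := Multiset.one_le_count_iff_mem.2 (Multiset.mem_toFinset.1 hx)
      rw [count_roots] at this ⊢
      split_ifs <;> omega
    _ ≤ _ := by
      rw [Finset.sum_add_distrib, Multiset.toFinset_sum_count_eq]
      exact Nat.add_le_add_left (card_roots' p) _

end SimpleRoots

theorem exists_derivative_mul_add_mul_eq_zero [CharZero K] [DecidableEq K] {p : K[X]}
    (hp : p.Splits) :
    ∃ A B : K[X], B ≠ 0 ∧ derivative p * B + p * A = 0 ∧
      B.natDegree = p.roots.toFinset.card ∧ A.degree < B.degree := by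
  rcases eq_or_ne p 0 with rfl | hp0
  · exact ⟨0, 1, one_ne_zero, by simp, by simp, by simp⟩
  set W := p.roots - p.roots.dedup
  set G := (W.map fun x => X - C x).prod
  have hG0 : G ≠ 0 := (monic_multiset_prod_of_monic _ _ fun x _ => monic_X_sub_C x).ne_zero
  obtain ⟨B, hB⟩ : G ∣ p := (Multiset.prod_X_sub_C_dvd_iff_le_roots hp0 W).2 tsub_le_self
  obtain ⟨A, hA⟩ : G ∣ derivative p := by
    rcases eq_or_ne (derivative p) 0 with h | h
    · rw [h]; exact dvd_zero G
    refine (Multiset.prod_X_sub_C_dvd_iff_le_roots h W).2 (Multiset.le_iff_count.2 fun x => ?_)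
    rw [Multiset.count_sub, Multiset.count_dedup, count_roots, count_roots]
    split_ifs with hx
    · rw [derivative_rootMultiplicity_of_root ((mem_roots hp0).1 hx)]
    · simp [rootMultiplicity_eq_zero (mt (mem_roots hp0).2 hx)]
  have hB0 : B ≠ 0 := by rintro rfl; exact hp0 (by simpa using hB)
  refine ⟨-A, B, hB0, by rw [hA, hB]; ring, ?_, ?_⟩
  · have hdeg := congrArg natDegree hB
    rw [natDegree_mul hG0 hB0, natDegree_multiset_prod_X_sub_C_eq_card,
      Multiset.card_sub (Multiset.dedup_le _), ← hp.natDegree_eq_card_roots] at hdeg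
    have : p.roots.dedup.card ≤ p.natDegree :=
      (Multiset.card_le_card (Multiset.dedup_le _)).trans (card_roots' p)
    rw [Multiset.card_toFinset]
    omega
  · have hlt := degree_derivative_lt hp0
    rw [hA, hB, degree_mul, degree_mul, WithBot.add_lt_add_iff_left (degree_ne_bot.2 hG0)] at hlt
    rwa [degree_neg]

theorem sub_two_mul_finrank_ker_sylvester_le [CharZero K] {p : K[X]} (hp : p.Splits) {r : ℕ}
    (hr : p.natDegree ≤ r) :
    r - 2 * finrank K (LinearMap.ker (sylvester (derivative p) p (r - 1) r).mulVecLin) ≤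
      (simpleRootSet p).ncard := by
  classical
  obtain ⟨A, B, hB0, hAB, hBdeg, hdeg⟩ := exists_derivative_mul_add_mul_eq_zero hp
  set d := p.roots.toFinset.card
  have hd : d ≤ r := (Multiset.toFinset_card_le _).trans ((card_roots' p).trans hr)
  have hBd : B.degree = d := by rw [degree_eq_natDegree hB0, hBdeg]
  have hker :
      r - d ≤ finrank K (LinearMap.ker (sylvester (derivative p) p (r - 1) r).mulVecLin) := by
    refine le_finrank_ker_sylvester ((natDegree_derivative_le p).trans (by omega)) hr hAB hB0
      ?_ (by rw [hBd]; exact_mod_cast (by omega : d + (r - d) ≤ r))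
    rcases eq_or_ne A 0 with rfl | hA0
    · simp
    rw [hBd, degree_eq_natDegree hA0, Nat.cast_lt] at hdeg
    rw [degree_eq_natDegree hA0]
    exact_mod_cast (by omega : A.natDegree + (r - d) ≤ r - 1)
  have := two_mul_card_roots_toFinset_le p
  omega

end Polynomial

namespace PowerSeries

variable {R : Type*} [CommRing R]

theorem constantCoeff_eval (f : (PowerSeries R)[X]) (a : PowerSeries R) :
    constantCoeff (f.eval a) = (f.map constantCoeff).eval (constantCoeff a) := by
  rw [eval_map, eval₂_hom]

theorem exists_X_pow_dvd_sub_of_X_pow_dvd_succ_sub (a : ℕ → PowerSeries R)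
    (ha : ∀ n, X ^ (n + 1) ∣ a (n + 1) - a n) : ∃ g, ∀ n, X ^ (n + 1) ∣ g - a n := by
  have hcauchy {n m : ℕ} (hnm : n ≤ m) : X ^ (n + 1) ∣ a m - a n := by
    induction m, hnm using Nat.le_induction with
    | base => simp
    | succ m _ ih =>
      rw [← sub_add_sub_cancel]
      exact dvd_add ((pow_dvd_pow X (by omega)).trans (ha m)) ih
  refine ⟨mk fun n => coeff n (a n), fun n => X_pow_dvd_iff.2 fun d hd => ?_⟩
  have := X_pow_dvd_iff.1 (hcauchy (Nat.lt_succ_iff.1 hd)) d (Nat.lt_succ_self d)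
  rw [map_sub, sub_eq_zero] at this
  rw [map_sub, coeff_mk, this, sub_self]

theorem eq_zero_of_forall_X_pow_dvd {φ : PowerSeries R} (h : ∀ n, X ^ (n + 1) ∣ φ) :
    φ = 0 := by
  ext n
  simpa using X_pow_dvd_iff.1 (h n) n (Nat.lt_succ_self n)

theorem exists_isRoot_of_isUnit_derivative (f : (PowerSeries R)[X]) {β : R}
    (hroot : (f.map constantCoeff).IsRoot β)
    (hunit : IsUnit ((f.map constantCoeff).derivative.eval β)) :
    ∃ g, constantCoeff g = β ∧ f.IsRoot g := by
  -- Newton's method with the derivative frozen at `β`: each step gains a factor of `X`.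
  obtain ⟨u, hu⟩ := hunit.exists_left_inv
  let a : ℕ → PowerSeries R := fun n => n.rec (C β) fun _ b => b - C u * f.eval b
  have hstep (n : ℕ) : a (n + 1) - a n = -(C u * f.eval (a n)) := sub_sub_cancel_left _ _
  have hinv (n : ℕ) : constantCoeff (a n) = β ∧ X ^ (n + 1) ∣ f.eval (a n) := by
    induction n with
    | zero => simp [a, X_dvd_iff, constantCoeff_eval, hroot.eq_zero]
    | succ n ih =>
      obtain ⟨hc, hdvd⟩ := ih
      set h := -(C u * f.eval (a n))
      have hXh : X ^ (n + 1) ∣ h := (dvd_mul_of_dvd_right hdvd _).neg_right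
      have hch : constantCoeff h = 0 := X_dvd_iff.1 ((dvd_pow_self X n.succ_ne_zero).trans hXh)
      have hX : X ∣ 1 - C u * f.derivative.eval (a n) := by
        rw [X_dvd_iff, map_sub, map_mul, constantCoeff_eval, hc, constantCoeff_C,
          ← derivative_map, hu, map_one, sub_self]
      have hnext : a (n + 1) = a n + h := (add_eq_of_eq_sub' (hstep n).symm).symm
      obtain ⟨q, hq⟩ := f.binomExpansion (a n) h
      refine ⟨by rw [hnext, map_add, hc, hch, add_zero], ?_⟩
      have : f.eval (a n) + f.derivative.eval (a n) * h + q * h ^ 2 =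
          f.eval (a n) * (1 - C u * f.derivative.eval (a n)) + q * h ^ 2 := by ring
      rw [hnext, hq, this, pow_succ]
      refine dvd_add (mul_dvd_mul hdvd hX) (dvd_mul_of_dvd_right ?_ _)
      calc X ^ (n + 1 + 1) ∣ (X ^ (n + 1)) ^ 2 := by
            rw [← pow_mul]; exact pow_dvd_pow X (by omega)
        _ ∣ h ^ 2 := pow_dvd_pow_of_dvd hXh 2
  obtain ⟨g, hg⟩ := exists_X_pow_dvd_sub_of_X_pow_dvd_succ_sub a fun n =>
    hstep n ▸ (dvd_mul_of_dvd_right (hinv n).2 _).neg_right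
  refine ⟨g, ?_, eq_zero_of_forall_X_pow_dvd fun n => ?_⟩
  · have := X_dvd_iff.1 (by simpa using hg 0)
    rwa [map_sub, sub_eq_zero, (hinv 0).1] at this
  · rw [← sub_add_cancel (f.eval g) (f.eval (a n))]
    exact dvd_add ((hg n).trans (sub_dvd_eval_sub _ _ _)) (hinv n).2

theorem constantCoeff_comp_aeval_C_add_X {S : Type*} [CommRing S] [Algebra R S] (a : S) :
    constantCoeff.comp (Polynomial.aeval (C a + X) : R[X] →ₐ[R] PowerSeries S).toRingHom =
      (Polynomial.aeval a).toRingHom := by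
  ext <;> simp [PowerSeries.algebraMap_apply]

theorem exists_finset_isRoot_card_eq_ncard_simpleRootSet {K : Type*} [Field K]
    (f : (PowerSeries K)[X]) :
    ∃ T : Finset (PowerSeries K), T.card = (simpleRootSet (f.map constantCoeff)).ncard ∧
      ∀ g ∈ T, f.IsRoot g := by
  classical
  have hlift (β : K) (hβ : β ∈ simpleRootSet (f.map constantCoeff)) :
      ∃ g, constantCoeff g = β ∧ f.IsRoot g :=
    exists_isRoot_of_isUnit_derivative f hβ.1 (Ne.isUnit hβ.2)
  choose! lift hlift using hlift
  have hfin := simpleRootSet_finite (f.map constantCoeff)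
  refine ⟨hfin.toFinset.image lift, ?_, ?_⟩
  · rw [Set.ncard_eq_toFinset_card _ hfin, Finset.card_image_of_injOn]
    intro x hx y hy hxy
    rw [← (hlift x (hfin.mem_toFinset.1 hx)).1, ← (hlift y (hfin.mem_toFinset.1 hy)).1, hxy]
  · simp only [Finset.mem_image, Set.Finite.mem_toFinset]
    rintro g ⟨β, hβ, rfl⟩
    exact (hlift β hβ).2

end PowerSeries

theorem stmt7_general {C K : Type*} [Field C] [CharZero C] [Field K] [IsAlgClosed K]
    [Algebra C K]
    (P : Polynomial (Polynomial C)) (rP : ℕ)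
    (hrP : P.natDegree = rP)
    (R : Polynomial C)
    (hR : R = (sylvesterMatrix P (Polynomial.derivative P) rP (rP - 1)).det)
    (hR0 : R ≠ 0)
    (α : K) (k : ℕ)
    (hk : (R.map (algebraMap C K)).rootMultiplicity α = k) :
    rP - 2 * k ≤
      {β : K | Polynomial.eval β (P.map ((Polynomial.aeval α).toRingHom : Polynomial C →+* K)) = 0
        ∧ Polynomial.eval β (Polynomial.derivative
            (P.map ((Polynomial.aeval α).toRingHom : Polynomial C →+* K))) ≠ 0}.ncard
    ∧ ∃ T : Finset (PowerSeries K), rP - 2 * k ≤ T.card ∧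
        ∀ g ∈ T, Polynomial.eval g (P.map
          (((Polynomial.aeval (PowerSeries.C (R := K) α + PowerSeries.X) :
              Polynomial C →ₐ[C] PowerSeries K)).toRingHom)) = 0 := by
  have : CharZero K := charZero_of_injective_algebraMap (algebraMap C K).injective
  set Q := P.map ((aeval α).toRingHom : C[X] →+* K)
  rw [hR, sylvesterMatrix_eq_sylvester hrP.le (hrP ▸ natDegree_derivative_le P)] at hR0 hk
  have hker :
      finrank K (LinearMap.ker (sylvester (derivative Q) Q (rP - 1) rP).mulVecLin) ≤ k := by
    rw [← hk, derivative_map, sylvester_map_map]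
    exact Matrix.finrank_ker_map_aeval_le_rootMultiplicity _ α hR0
  have hsimple : rP - 2 * k ≤ (simpleRootSet Q).ncard :=
    (Nat.sub_le_sub_left (by omega) rP).trans
      (sub_two_mul_finrank_ker_sylvester_le (IsAlgClosed.splits Q) (hrP ▸ natDegree_map_le))
  refine ⟨hsimple, ?_⟩
  obtain ⟨T, hT, hroot⟩ := PowerSeries.exists_finset_isRoot_card_eq_ncard_simpleRootSet
    (P.map (aeval (PowerSeries.C α + PowerSeries.X) : C[X] →ₐ[C] PowerSeries K).toRingHom)
  rw [Polynomial.map_map, PowerSeries.constantCoeff_comp_aeval_C_add_X] at hT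
  exact ⟨T, hT ▸ hsimple, hroot⟩

/-- If `α` is a root of multiplicity `k` of `R = Res_y(P,P_y)`, then `P(α,y)=0`
has at least `r_P - 2k` simple roots in `K = C̄`, and consequently
`P(x,g(x)) = 0` has at least `r_P - 2k` solutions `g ∈ K[[x-α]]` (realized by
substituting `x ↦ α + X`). -/
theorem stmt7 {C K : Type*} [Field C] [CharZero C] [Field K] [IsAlgClosed K]
    [Algebra C K]
    (P : Polynomial (Polynomial C)) (rP dP : ℕ)
    (hrP : P.natDegree = rP) (hrP1 : 1 ≤ rP)
    (hdP : ∀ i, (P.coeff i).natDegree ≤ dP)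
    (hsf : Squarefree (P.map (algebraMap (Polynomial C) (RatFunc C))))
    (hnof : ∀ q : Polynomial K, 0 < q.natDegree →
      ¬ (q.map (Polynomial.C : K →+* Polynomial K)
          ∣ P.map (Polynomial.mapRingHom (algebraMap C K))))
    (R : Polynomial C)
    (hR : R = (sylvesterMatrix P (Polynomial.derivative P) rP (rP - 1)).det)
    (hR0 : R ≠ 0)
    (α : K) (k : ℕ)
    (hk : (R.map (algebraMap C K)).rootMultiplicity α = k) :
    rP - 2 * k ≤
      {β : K | Polynomial.eval β (P.map ((Polynomial.aeval α).toRingHom : Polynomial C →+* K)) = 0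
        ∧ Polynomial.eval β (Polynomial.derivative
            (P.map ((Polynomial.aeval α).toRingHom : Polynomial C →+* K))) ≠ 0}.ncard
    ∧ ∃ T : Finset (PowerSeries K), rP - 2 * k ≤ T.card ∧
        ∀ g ∈ T, Polynomial.eval g (P.map
          (((Polynomial.aeval (PowerSeries.C (R := K) α + PowerSeries.X) :
              Polynomial C →ₐ[C] PowerSeries K)).toRingHom)) = 0 :=
  stmt7_general P rP hrP R hR hR0 α k hk
end

section
/- Let C be a field of characteristic zero, m, n ≥ 1, and let g_1, ..., g_n be elements of a power series ring over C̄. Suppose B ∈ C[y]^{k×m} is a matrix of polynomials and A_ℓ is a matrix such that the square matrix C_ℓ with block columns (A_ℓ(x,g_i) over B(g_i)) for i = 1..n is defined. If for every polynomial p ∈ C[y] and every i ≠ j the element g_i − g_j divides p(g_i) − p(g_j), then det C_ℓ is divisible by ∏_{i<j} (g_i − g_j)^m, where m is the number of columns in each block whose entries are polynomials in g_i. -/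
/-!
Subtracting the block of columns of `g_j` from that of `g_i`, column by column, makes `m`
columns divisible by `g_i - g_j`, so `(g_i - g_j)^m` divides the determinant. For particular
`g` these powers need not be coprime, so the argument is run with the `g_i` replaced by
independent variables `X_i`, where the `X_i - X_j` are pairwise non-associated primes, and the
resulting divisibility is then specialised at `X = g`.
-/

namespace Matrix

variable {n R : Type*} [Fintype n] [DecidableEq n] [CommRing R]

theorem pow_card_dvd_det_of_dvd_sub_col (t : R) (σ : n → n) (s : Finset n)
    (hσ : ∀ c ∈ s, σ c ∉ s) (A : Matrix n n R) (hA : ∀ c ∈ s, ∀ r, t ∣ A r c - A r (σ c)) :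
    t ^ s.card ∣ A.det := by
  induction s using Finset.induction_on generalizing A with
  | empty => simp
  | insert c s hc ih =>
    have hσc : σ c ≠ c := fun h => hσ c (s.mem_insert_self c) (by simp [h])
    choose d hd using hA c (s.mem_insert_self c)
    have hcol : A.updateCol c ((fun r => A r (σ c)) + t • d) = A := by
      ext r q
      rcases eq_or_ne q c with rfl | hq
      · simp [← hd]
      · simp [hq]
    have hdet : A.det = t * (A.updateCol c d).det := by
      rw [← hcol, det_updateCol_add, det_updateCol_smul, det_updateCol_eq_zero hσc, zero_add,
        updateCol_idem]
    rw [hdet, Finset.card_insert_of_notMem hc, pow_succ']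
    refine mul_dvd_mul_left t (ih (fun c' hc' => ?_) _ fun c' hc' r => ?_)
    · exact fun h => hσ c' (Finset.mem_insert_of_mem hc') (Finset.mem_insert_of_mem h)
    · have hc'c : c' ≠ c := fun h => hc (h ▸ hc')
      have hσc' : σ c' ≠ c := fun h =>
        hσ c' (Finset.mem_insert_of_mem hc') (h ▸ s.mem_insert_self c)
      simpa [hc'c, hσc'] using hA c' (Finset.mem_insert_of_mem hc') r

end Matrix

namespace MvPolynomial

variable {σ R : Type*} [CommRing R]

theorem prime_X_sub_X [IsDomain R] [DecidableEq σ] {i j : σ} (hij : i ≠ j) :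
    Prime (X i - X j : MvPolynomial σ R) := by
  let e := (renameEquiv R (Equiv.optionSubtypeNe i).symm).trans
    (optionEquivLeft R {k // k ≠ i})
  have he : e (X i - X j) = Polynomial.X - Polynomial.C (X ⟨j, hij.symm⟩) := by
    simp [e, Equiv.optionSubtypeNe_symm_of_ne hij.symm]
  rw [← MulEquiv.prime_iff e.toRingEquiv.toMulEquiv]
  exact he ▸ Polynomial.prime_X_sub_C _

theorem eq_or_eq_of_X_sub_X_dvd [Nontrivial R] [DecidableEq σ] {a b c d : σ} (hcd : c ≠ d)
    (h : (X a - X b : MvPolynomial σ R) ∣ X c - X d) : c = a ∨ c = b := by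
  by_contra! hc
  have := map_dvd (aeval (Pi.single c (1 : R))) h
  simp [hc.1.symm, hc.2.symm, hcd.symm] at this

end MvPolynomial

theorem Finset.prod_pow_dvd_of_prime {ι M : Type*} [CommMonoidWithZero M] [IsCancelMulZero M]
    [DecidableEq ι] {s : Finset ι} {p : ι → M} {d : M} (m : ℕ) (hp : ∀ a ∈ s, Prime (p a))
    (hinj : ∀ a ∈ s, ∀ b ∈ s, p a ∣ p b → a = b) (hd : ∀ a ∈ s, p a ^ m ∣ d) :
    ∏ a ∈ s, p a ^ m ∣ d := by
  induction s using Finset.induction_on generalizing d with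
  | empty => simp
  | insert a s ha ih =>
    have hpa := hp a (s.mem_insert_self a)
    have hcop : ¬ p a ∣ ∏ b ∈ s, p b ^ m := fun h => by
      obtain ⟨b, hb, hab⟩ := hpa.exists_mem_finset_dvd h
      exact ha (hinj a (s.mem_insert_self a) b (Finset.mem_insert_of_mem hb)
        (hpa.dvd_of_dvd_pow hab) ▸ hb)
    obtain ⟨e, rfl⟩ := ih (fun b hb => hp b (Finset.mem_insert_of_mem hb))
      (fun b hb c hc => hinj b (Finset.mem_insert_of_mem hb) c (Finset.mem_insert_of_mem hc))
      (fun b hb => hd b (Finset.mem_insert_of_mem hb))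
    rw [Finset.prod_insert ha, mul_comm]
    exact mul_dvd_mul_left _ (hpa.pow_dvd_of_dvd_mul_left m hcop (hd a (s.mem_insert_self a)))

section BlockEval

variable {ι κ R S : Type*} [CommRing R] [CommRing S] [Algebra R S]

noncomputable def blockEvalMatrix (E : ι × κ → κ → Polynomial R) (x : ι → S) :
    Matrix (ι × κ) (ι × κ) S :=
  fun p q => Polynomial.aeval (x q.1) (E p q.2)

theorem blockEvalMatrix_map {T : Type*} [CommRing T] [Algebra R T]
    (E : ι × κ → κ → Polynomial R) (x : ι → S) (f : S →ₐ[R] T) :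
    (blockEvalMatrix E x).map f = blockEvalMatrix E (f ∘ x) := by
  ext p q
  exact (Polynomial.aeval_algHom_apply f (x q.1) (E p q.2)).symm

variable [Fintype ι] [Fintype κ] [DecidableEq ι] [DecidableEq κ]

theorem pow_card_dvd_det_blockEvalMatrix (E : ι × κ → κ → Polynomial R) (x : ι → S) {i j : ι}
    (hij : i ≠ j) : (x i - x j) ^ Fintype.card κ ∣ (blockEvalMatrix E x).det := by
  simpa using Matrix.pow_card_dvd_det_of_dvd_sub_col (x i - x j) (fun q => (j, q.2))
    (Finset.univ.map (Function.Embedding.sectR i κ)) (by simp [hij]) _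
    fun c hc r => by
      obtain ⟨c, -, rfl⟩ := Finset.mem_map.mp hc
      simpa only [blockEvalMatrix, Function.Embedding.sectR_apply, Polynomial.aeval_def,
        Polynomial.eval₂_eq_eval_map]
        using Polynomial.sub_dvd_eval_sub (x i) (x j) ((E r c).map (algebraMap R S))

theorem prod_pow_card_dvd_det_blockEvalMatrix [LinearOrder ι] [IsDomain R]
    (E : ι × κ → κ → Polynomial R) (x : ι → S) :
    ∏ q ∈ Finset.univ.filter (fun q : ι × ι => q.1 < q.2), (x q.1 - x q.2) ^ Fintype.card κ ∣
      (blockEvalMatrix E x).det := by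
  have hgeneric : ∏ q ∈ Finset.univ.filter (fun q : ι × ι => q.1 < q.2),
      (MvPolynomial.X q.1 - MvPolynomial.X q.2 : MvPolynomial ι R) ^ Fintype.card κ ∣
        (blockEvalMatrix E MvPolynomial.X).det := by
    refine Finset.prod_pow_dvd_of_prime _ (fun q hq => ?_) (fun a ha b hb hab => ?_)
      fun q hq => pow_card_dvd_det_blockEvalMatrix E _ (Finset.mem_filter.mp hq).2.ne
    · exact MvPolynomial.prime_X_sub_X (Finset.mem_filter.mp hq).2.ne
    · have ha := (Finset.mem_filter.mp ha).2
      have hb := (Finset.mem_filter.mp hb).2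
      have h₁ := MvPolynomial.eq_or_eq_of_X_sub_X_dvd hb.ne hab
      have h₂ := MvPolynomial.eq_or_eq_of_X_sub_X_dvd hb.ne' (dvd_sub_comm.mp hab)
      grind
  simpa [AlgHom.map_det, blockEvalMatrix_map, Function.comp_def]
    using map_dvd (MvPolynomial.aeval x) hgeneric

end BlockEval

theorem stmt10_general {K : Type*} [Field K]
    (n m : ℕ)
    (g : Fin n → PowerSeries K)
    (E : (Fin n × Fin m) → Fin m → Polynomial (PowerSeries K))
    (M : Matrix (Fin n × Fin m) (Fin n × Fin m) (PowerSeries K))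
    (hM : ∀ p j, M p j = Polynomial.eval (g j.1) (E p j.2)) :
    (∏ q ∈ Finset.univ.filter (fun q : Fin n × Fin n => q.1 < q.2),
        (g q.1 - g q.2) ^ m) ∣ M.det := by
  have hM' : M = blockEvalMatrix E g := by
    ext p q
    simp [hM, blockEvalMatrix]
  simpa [hM'] using prod_pow_card_dvd_det_blockEvalMatrix E g

/-- Divisibility lemma (Lemma 4 of the paper): let `g₁,…,g_n` be elements of a
power series ring over an algebraically closed field of characteristic zero,
and let `M` be a square block matrix whose block of `m` columns indexed by `i`
has entries obtained by evaluating fixed polynomials at `g_i` (the blocks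
`(A_ℓ(x,g_i)` over `B(g_i))`, with the `x`-dependence absorbed in the power
series coefficients). If `g_i - g_j` divides `p(g_i) - p(g_j)` for every
polynomial `p` and all `i ≠ j`, then `det M` is divisible by
`∏_{i<j} (g_i - g_j)^m`. -/
theorem stmt10 {K : Type*} [Field K] [CharZero K] [IsAlgClosed K]
    (n m : ℕ) (hn : 1 ≤ n) (hm : 1 ≤ m)
    (g : Fin n → PowerSeries K)
    (E : (Fin n × Fin m) → Fin m → Polynomial (PowerSeries K))
    (M : Matrix (Fin n × Fin m) (Fin n × Fin m) (PowerSeries K))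
    (hM : ∀ p j, M p j = Polynomial.eval (g j.1) (E p j.2))
    (hdiv : ∀ (p : Polynomial (PowerSeries K)) (i j : Fin n), i ≠ j →
      (g i - g j) ∣ (Polynomial.eval (g i) p - Polynomial.eval (g j) p)) :
    (∏ q ∈ Finset.univ.filter (fun q : Fin n × Fin n => q.1 < q.2),
        (g q.1 - g q.2) ^ m) ∣ M.det :=
  stmt10_general n m g E M hM
end

section
/- Let r, d, r_L, r_P ∈ ℕ with r_L, r_P ≥ 1, and let u_deg ∈ ℕ. If r ≥ r_L·r_P and d > −1 + r·r_L·r_P·u_deg/(r + 1 − r_L·r_P), then (r+1)(d+1) > (1 + d + r·u_deg)·r_L·r_P. Consequently a homogeneous linear system over C with (r+1)(d+1) unknowns and at most (1 + d + r·u_deg)·r_L·r_P equations has a nontrivial solution. -/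
/-- Dimension-counting core of the linear-algebra order-degree bound:
if `r ≥ r_L r_P` and `d > -1 + r·r_L·r_P·u/(r+1-r_L·r_P)` then
`(r+1)(d+1) > (1+d+r·u)·r_L·r_P`, and consequently every homogeneous linear
system over a field `C` with `(r+1)(d+1)` unknowns and at most
`(1+d+r·u)·r_L·r_P` equations has a nontrivial solution. -/
theorem stmt12 (C : Type*) [Field C] (r d rL rP u : ℕ)
    (hrL : 1 ≤ rL) (hrP : 1 ≤ rP) (hr : rL * rP ≤ r)
    (hd : (d : ℚ) > -1 + (r : ℚ) * rL * rP * u / ((r : ℚ) + 1 - (rL : ℚ) * rP)) :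
    (r + 1) * (d + 1) > (1 + d + r * u) * (rL * rP) ∧
      ∀ (m : ℕ) (A : Matrix (Fin m) (Fin ((r + 1) * (d + 1))) C),
        m ≤ (1 + d + r * u) * (rL * rP) →
          ∃ v : Fin ((r + 1) * (d + 1)) → C, v ≠ 0 ∧ A.mulVec v = 0 := by
  have hk : (rL : ℚ) * rP ≤ (r : ℚ) := by exact_mod_cast hr
  have hden : (0 : ℚ) < (r : ℚ) + 1 - (rL : ℚ) * rP := by linarith
  have hkey : ((d : ℚ) + 1) * ((r : ℚ) + 1 - (rL : ℚ) * rP) > (r : ℚ) * rL * rP * u := by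
    have := (div_lt_iff₀ hden).mp (by linarith : (r : ℚ) * rL * rP * u / ((r : ℚ) + 1 - (rL : ℚ) * rP) < (d : ℚ) + 1)
    linarith
  have hineq : (r + 1) * (d + 1) > (1 + d + r * u) * (rL * rP) := by
    have : ((r : ℚ) + 1) * ((d : ℚ) + 1) > (1 + (d : ℚ) + (r : ℚ) * u) * ((rL : ℚ) * rP) := by
      nlinarith
    exact_mod_cast this
  refine ⟨hineq, fun m A hm => ?_⟩
  have hlt : m < (r + 1) * (d + 1) := lt_of_le_of_lt hm hineq
  have hninj : ¬ Function.Injective A.mulVecLin := by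
    intro hinj
    have := LinearMap.finrank_le_finrank_of_injective hinj
    simp only [Module.finrank_pi, Fintype.card_fin] at this
    omega
  rw [← LinearMap.ker_eq_bot, Submodule.eq_bot_iff] at hninj
  push_neg at hninj
  obtain ⟨v, hv, hv0⟩ := hninj
  exact ⟨v, hv0, hv⟩
end

section
/- Fix r ≥ 1 and d ≥ r. The map sending a monic linear differential operator L = ∂^r + a_{r−1}(x)∂^{r−1} + ... + a_0(x) with polynomial coefficients a_j of degree ≤ d to its fundamental matrix of truncated power series solutions at 0 — i.e., to the tuple (b_{j,i})_{0≤j<r, 0≤i≤d} where the unique power series solution f_j with f_j ≡ x^j mod x^r is written f_j = x^j + Σ_{i=0}^{d} b_{j,i} x^{r+i} — is a bijection (in fact an isomorphism of affine varieties) between the coefficient space C̄^{r(d+1)} of (a_{j,i}) and the space C̄^{r(d+1)} of (b_{j,i}). -/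
/-!
Read coefficientwise, `L f = 0` says that `(n+1)⋯(n+r) f_{n+r}` equals a linear expression in
`f_0, …, f_{n+r-1}`, so the solution with prescribed `f_0, …, f_{r-1}` exists and is unique by
well-founded recursion. Conversely, for `f_j = x^j + ∑ i, b_{j,i} x^{r+i}` the coefficient `n ≤ d`
of `L f_j` involves the column `a_{·,n}` only through the term `j! a_{j,n}` coming from `x^j`, the
rest being determined by `b` and the columns `a_{·,i}`, `i < n`. Hence `a` is recovered from `b`
column by column: both directions are instances of the unique fixed point of a causal operator.
-/

open PowerSeries

/-- `stmt16Rel r d a b` says: for each `j < r`, there is a power series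
solution `f_j` of the monic operator
`L = ∂^r + a_{r-1}(x)∂^{r-1} + ⋯ + a_0(x)` (with `a_j(x) = Σ_i a j i·x^i`)
satisfying `f_j ≡ x^j mod x^r`, whose coefficients of `x^{r+i}` for
`0 ≤ i ≤ d` are `b j i`. -/
def stmt16Rel (K : Type*) [Field K] (r d : ℕ)
    (a b : Fin r → Fin (d + 1) → K) : Prop :=
  ∀ j : Fin r, ∃ f : PowerSeries K,
    ((PowerSeries.derivativeFun)^[r] f
      + ∑ k : Fin r,
          (∑ i : Fin (d + 1), PowerSeries.C (a k i) * PowerSeries.X ^ (i : ℕ))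
            * (PowerSeries.derivativeFun)^[(k : ℕ)] f = 0)
    ∧ (∀ i < r, PowerSeries.coeff i f = if i = (j : ℕ) then 1 else 0)
    ∧ (∀ i : Fin (d + 1), PowerSeries.coeff (r + (i : ℕ)) f = b j i)

theorem forall_lt_add_iff {N r : ℕ} {P : ℕ → Prop} :
    (∀ m < N + r, P m) ↔ (∀ m < r, P m) ∧ ∀ n : Fin N, P (n + r) := by
  refine ⟨fun h => ⟨fun m hm => h m (by omega), fun n => h _ (by omega)⟩, ?_⟩
  rintro ⟨hlt, hadd⟩ m hm
  rcases lt_or_ge m r with hmr | hmr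
  · exact hlt m hmr
  · obtain ⟨n, rfl⟩ := Nat.exists_eq_add_of_le' hmr
    exact hadd ⟨n, by omega⟩

def IsCausal {ι α : Type*} [LT ι] (Φ : ι → (ι → α) → α) : Prop :=
  ∀ n u v, (∀ m < n, u m = v m) → Φ n u = Φ n v

namespace IsCausal

variable {ι α : Type*} [Preorder ι] [WellFoundedLT ι] {Φ : ι → (ι → α) → α}

theorem eqOn_iff (hΦ : IsCausal Φ) {u v : ι → α} (hu : ∀ n, u n = Φ n u) {s : Set ι}
    (hs : IsLowerSet s) : (∀ n ∈ s, u n = v n) ↔ ∀ n ∈ s, v n = Φ n v := by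
  refine ⟨fun h n hn => ?_, fun h n hn => ?_⟩
  · rw [← h n hn, hu n]
    exact hΦ n u v fun m hm => h m (hs hm.le hn)
  · induction n using WellFoundedLT.induction with
    | ind n ih =>
      rw [hu n, h n hn]
      exact hΦ n u v fun m hm => ih m hm (hs hm.le hn)

theorem existsUnique_fixedPoint [Nonempty α] (hΦ : IsCausal Φ) :
    ∃! u : ι → α, ∀ n, u n = Φ n u := by
  classical
  let u : ι → α := WellFoundedLT.fix fun n IH =>
    Φ n fun m => if h : m < n then IH m h else Classical.arbitrary α
  have hu : ∀ n, u n = Φ n u := fun n => by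
    rw [show u n = _ from WellFoundedLT.fix_eq _ n]
    exact hΦ n _ _ fun m hm => dif_pos hm
  refine ⟨u, hu, fun v hv => funext fun n => ?_⟩
  exact ((hΦ.eqOn_iff hu isLowerSet_univ).mpr (fun n _ => hv n) n trivial).symm

end IsCausal

section LinearDiffOp

variable {R : Type*} [CommSemiring R] {r d : ℕ}

-- Definitionally the operator of `stmt16Rel`, whose `derivativeFun` underlies `d⁄dX R`.
noncomputable def linearDiffOp (a : Fin r → Fin (d + 1) → R) (f : R⟦X⟧) : R⟦X⟧ :=
  (d⁄dX R)^[r] f + ∑ k : Fin r, (∑ i : Fin (d + 1), C (a k i) * X ^ (i : ℕ)) * (d⁄dX R)^[k] f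

def lowerOrderCoeff (a : Fin r → Fin (d + 1) → R) (c : ℕ → R) (n : ℕ) : R :=
  ∑ k : Fin r, ∑ i : Fin (d + 1),
    if (i : ℕ) ≤ n then a k i * (n - i + 1).ascFactorial k * c (n - i + k) else 0

theorem coeff_linearDiffOp (a : Fin r → Fin (d + 1) → R) (f : R⟦X⟧) (n : ℕ) :
    coeff n (linearDiffOp a f)
      = (n + 1).ascFactorial r * coeff (n + r) f + lowerOrderCoeff a (coeff · f) n := by
  simp only [linearDiffOp, lowerOrderCoeff, map_add, map_sum, Finset.sum_mul, mul_assoc,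
    coeff_C_mul, coeff_X_pow_mul', coeff_iterate_derivative]
  congr 1
  refine Finset.sum_congr rfl fun k _ => Finset.sum_congr rfl fun i _ => ?_
  split_ifs <;> simp

theorem lowerOrderCoeff_congr (a : Fin r → Fin (d + 1) → R) {c c' : ℕ → R} {n : ℕ}
    (h : ∀ m < n + r, c m = c' m) : lowerOrderCoeff a c n = lowerOrderCoeff a c' n := by
  refine Finset.sum_congr rfl fun k _ => Finset.sum_congr rfl fun i _ => ?_
  split_ifs with hi
  · rw [h _ (by omega)]
  · rfl

end LinearDiffOp

section Solutions

variable {K : Type*} [Field K] {r d : ℕ}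

noncomputable def solutionStep (a : Fin r → Fin (d + 1) → K) (init : ℕ → K) (m : ℕ)
    (c : ℕ → K) : K :=
  if m < r then init m else -((m - r + 1).ascFactorial r : K)⁻¹ * lowerOrderCoeff a c (m - r)

theorem isCausal_solutionStep (a : Fin r → Fin (d + 1) → K) (init : ℕ → K) :
    IsCausal (solutionStep a init) := by
  intro m c c' h
  unfold solutionStep
  split_ifs
  · rfl
  · rw [lowerOrderCoeff_congr a fun i hi => h i (by omega)]

theorem solutionStep_of_lt (a : Fin r → Fin (d + 1) → K) (init c : ℕ → K) {m : ℕ}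
    (hm : m < r) :
    solutionStep a init m c = init m :=
  if_pos hm

variable [CharZero K]

theorem solutionStep_add_eq_iff (a : Fin r → Fin (d + 1) → K) (init c : ℕ → K) (n : ℕ) :
    c (n + r) = solutionStep a init (n + r) c
      ↔ (n + 1).ascFactorial r * c (n + r) + lowerOrderCoeff a c n = 0 := by
  have hne : ((n + 1).ascFactorial r : K) ≠ 0 :=
    Nat.cast_ne_zero.2 (Nat.ascFactorial_pos n r).ne'
  rw [solutionStep, if_neg (by omega), Nat.add_sub_cancel]
  field_simp
  constructor <;> intro h <;> linear_combination h

theorem linearDiffOp_eq_zero_and_iff (a : Fin r → Fin (d + 1) → K) (init : ℕ → K) (f : K⟦X⟧) :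
    (linearDiffOp a f = 0 ∧ ∀ i < r, coeff i f = init i)
      ↔ ∀ m, coeff m f = solutionStep a init m (coeff · f) := by
  have hL : linearDiffOp a f = 0 ↔
      ∀ n, coeff (n + r) f = solutionStep a init (n + r) (coeff · f) := by
    refine PowerSeries.ext_iff.trans <| forall_congr' fun n => ?_
    rw [solutionStep_add_eq_iff a init (coeff · f), coeff_linearDiffOp, map_zero]
  constructor
  · rintro ⟨hf, hinit⟩ m
    rcases lt_or_ge m r with hm | hm
    · rw [solutionStep_of_lt a init _ hm, hinit m hm]
    · obtain ⟨n, rfl⟩ := Nat.exists_eq_add_of_le' hm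
      exact hL.1 hf n
  · intro h
    exact ⟨hL.2 fun n => h _, fun i hi => by rw [h i, solutionStep_of_lt a init _ hi]⟩

theorem existsUnique_solution (a : Fin r → Fin (d + 1) → K) (init : ℕ → K) :
    ∃! f : K⟦X⟧, linearDiffOp a f = 0 ∧ ∀ i < r, coeff i f = init i := by
  obtain ⟨c, hc, hc_unique⟩ := (isCausal_solutionStep a init).existsUnique_fixedPoint
  simp only [linearDiffOp_eq_zero_and_iff]
  refine ⟨mk c, by simpa using hc, fun g hg => ?_⟩
  ext m
  rw [coeff_mk, ← hc_unique _ hg]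

noncomputable def fundamentalSolution (a : Fin r → Fin (d + 1) → K) (j : Fin r) : K⟦X⟧ :=
  (existsUnique_solution a fun i => if i = j then 1 else 0).exists.choose

theorem fundamentalSolution_spec (a : Fin r → Fin (d + 1) → K) (j : Fin r) :
    linearDiffOp a (fundamentalSolution a j) = 0
      ∧ ∀ i < r, coeff i (fundamentalSolution a j) = if i = j then 1 else 0 :=
  (existsUnique_solution a _).exists.choose_spec

theorem eq_fundamentalSolution {a : Fin r → Fin (d + 1) → K} {j : Fin r} {f : K⟦X⟧}
    (hf : linearDiffOp a f = 0) (hinit : ∀ i < r, coeff i f = if i = j then 1 else 0) :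
    f = fundamentalSolution a j :=
  (existsUnique_solution a _).unique ⟨hf, hinit⟩ (fundamentalSolution_spec a j)

noncomputable def fundamentalMatrix (a : Fin r → Fin (d + 1) → K) : Fin r → Fin (d + 1) → K :=
  fun j i => coeff (r + i) (fundamentalSolution a j)

theorem stmt16Rel_iff {a b : Fin r → Fin (d + 1) → K} :
    stmt16Rel K r d a b ↔ fundamentalMatrix a = b := by
  constructor
  · intro h
    funext j i
    obtain ⟨f, hf, hinit, hb⟩ := h j
    rw [← hb i, eq_fundamentalSolution hf hinit]
    rfl
  · rintro rfl j
    exact ⟨_, (fundamentalSolution_spec a j).1, (fundamentalSolution_spec a j).2, fun i => rfl⟩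

end Solutions

section Inverse

variable {K : Type*} [Field K] {r d : ℕ}

/-- The coefficients of `x ^ j + ∑ i, b j i * x ^ (r + i)`. -/
noncomputable def jetCoeff (b : Fin r → Fin (d + 1) → K) (j : Fin r) (m : ℕ) : K :=
  if m < r then (if m = j then 1 else 0) else if h : m - r < d + 1 then b j ⟨m - r, h⟩ else 0

theorem jetCoeff_of_lt (b : Fin r → Fin (d + 1) → K) (j : Fin r) {m : ℕ} (hm : m < r) :
    jetCoeff b j m = if m = j then 1 else 0 :=
  if_pos hm

theorem jetCoeff_add (b : Fin r → Fin (d + 1) → K) (j : Fin r) (n : Fin (d + 1)) :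
    jetCoeff b j (n + r) = b j n := by
  rw [jetCoeff, if_neg (by omega), dif_pos (by omega)]
  simp

theorem lowerOrderCoeff_jetCoeff (a b : Fin r → Fin (d + 1) → K) (j : Fin r)
    (n : Fin (d + 1)) :
    lowerOrderCoeff a (jetCoeff b j) n = a j n * ((j : ℕ).factorial : K) +
      ∑ k : Fin r, ∑ i : Fin (d + 1), if i < n
        then a k i * ((n - i + 1 : ℕ).ascFactorial k : K) * jetCoeff b j (n - i + k) else 0 := by
  have hsplit : ∀ (k : Fin r) (i : Fin (d + 1)), (if (i : ℕ) ≤ n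
        then a k i * ((n - i + 1 : ℕ).ascFactorial k : K) * jetCoeff b j (n - i + k) else 0)
      = (if n = i then a k n * ((k : ℕ).factorial : K) * (if k = j then 1 else 0) else 0)
        + if i < n
          then a k i * ((n - i + 1 : ℕ).ascFactorial k : K) * jetCoeff b j (n - i + k) else 0 := by
    intro k i
    rcases lt_trichotomy i n with h | rfl | h
    · simp [h, h.le, h.ne']
    · simp [jetCoeff_of_lt b j k.isLt, Fin.ext_iff, Nat.one_ascFactorial]
    · simp [h.not_ge, h.not_gt, h.ne]
  simp only [lowerOrderCoeff, hsplit, Finset.sum_add_distrib, Finset.sum_ite_eq, Finset.mem_univ,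
    if_true, mul_ite, mul_one, mul_zero, Finset.sum_ite_eq']

/-- Coefficient `n` of `L (x ^ j + ∑ i, b j i * x ^ (r + i)) = 0`, solved for `a j n`, with `u i`
standing for the column `a · i`. -/
noncomputable def operatorCoeffStep (b : Fin r → Fin (d + 1) → K) (n : Fin (d + 1))
    (u : Fin (d + 1) → Fin r → K) (j : Fin r) : K :=
  -((j : ℕ).factorial : K)⁻¹ * (((n : ℕ) + 1).ascFactorial r * b j n +
    ∑ k : Fin r, ∑ i : Fin (d + 1),
      if i < n then u i k * ((n - i + 1 : ℕ).ascFactorial k : K) * jetCoeff b j (n - i + k) else 0)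

theorem isCausal_operatorCoeffStep (b : Fin r → Fin (d + 1) → K) :
    IsCausal (operatorCoeffStep b) := by
  intro n u v h
  funext j
  unfold operatorCoeffStep
  congr 2
  refine Finset.sum_congr rfl fun k _ => Finset.sum_congr rfl fun i _ => ?_
  split_ifs with hi
  · rw [h i hi]
  · rfl

variable [CharZero K]

theorem fundamentalMatrix_eq_iff {a b : Fin r → Fin (d + 1) → K} :
    fundamentalMatrix a = b ↔ ∀ j, ∀ n : Fin (d + 1),
      ((n : ℕ) + 1).ascFactorial r * b j n + lowerOrderCoeff a (jetCoeff b j) n = 0 := by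
  refine funext_iff.trans <| forall_congr' fun j => ?_
  set init : ℕ → K := fun i => if i = j then 1 else 0
  have hfix := (linearDiffOp_eq_zero_and_iff a init _).1 (fundamentalSolution_spec a j)
  have key := (isCausal_solutionStep a init).eqOn_iff hfix (v := jetCoeff b j)
    (isLowerSet_Iio (d + 1 + r))
  simp only [Set.mem_Iio, forall_lt_add_iff, jetCoeff_add] at key
  have hcoeff : ∀ m < r, coeff m (fundamentalSolution a j) = jetCoeff b j m := fun m hm => by
    rw [(fundamentalSolution_spec a j).2 m hm, jetCoeff_of_lt b j hm]
  have hjet : ∀ m < r, jetCoeff b j m = solutionStep a init m (jetCoeff b j) := fun m hm => by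
    rw [jetCoeff_of_lt b j hm, solutionStep_of_lt a init _ hm]
  rw [and_iff_right hcoeff, and_iff_right hjet] at key
  refine (funext_iff.trans ?_).trans (key.trans ?_) <;> refine forall_congr' fun n => ?_
  · rw [fundamentalMatrix, add_comm]
  · rw [← jetCoeff_add b j n, solutionStep_add_eq_iff]

theorem fundamentalMatrix_eq_iff_fixedPoint {a b : Fin r → Fin (d + 1) → K} :
    fundamentalMatrix a = b ↔
      ∀ n, Function.swap a n = operatorCoeffStep b n (Function.swap a) := by
  rw [fundamentalMatrix_eq_iff, forall_comm]
  refine forall_congr' fun n => Iff.trans ?_ funext_iff.symm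
  refine forall_congr' fun j => ?_
  have hj : ((j : ℕ).factorial : K) ≠ 0 := Nat.cast_ne_zero.2 (Nat.factorial_ne_zero _)
  rw [lowerOrderCoeff_jetCoeff, Function.swap, operatorCoeffStep]
  field_simp
  constructor <;> intro h <;> linear_combination h

end Inverse

theorem stmt16_general {K : Type*} [Field K] [CharZero K]
    (r d : ℕ) :
    (∀ a : Fin r → Fin (d + 1) → K, ∃! b, stmt16Rel K r d a b)
    ∧ (∀ b : Fin r → Fin (d + 1) → K, ∃! a, stmt16Rel K r d a b) := by
  refine ⟨fun a => ⟨fundamentalMatrix a, stmt16Rel_iff.2 rfl,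
    fun b hb => (stmt16Rel_iff.1 hb).symm⟩, fun b => ?_⟩
  simp only [stmt16Rel_iff, fundamentalMatrix_eq_iff_fixedPoint]
  exact (Equiv.piComm _).existsUnique_congr_right.2
    (isCausal_operatorCoeffStep b).existsUnique_fixedPoint

/-- The map sending the coefficient tuple `(a_{j,i})` of a monic operator
`L = ∂^r + a_{r-1}∂^{r-1} + ⋯ + a_0` (with polynomial coefficients of degree
`≤ d`) to its fundamental matrix `(b_{j,i})` of truncated power series
solutions at `0` is a bijection `K̄^{r(d+1)} → K̄^{r(d+1)}`: every `a`
determines a unique `b` and every `b` comes from a unique `a`. -/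
theorem stmt16 {K : Type*} [Field K] [CharZero K] [IsAlgClosed K]
    (r d : ℕ) (hr : 1 ≤ r) (hd : r ≤ d) :
    (∀ a : Fin r → Fin (d + 1) → K, ∃! b, stmt16Rel K r d a b)
    ∧ (∀ b : Fin r → Fin (d + 1) → K, ∃! a, stmt16Rel K r d a b) :=
  stmt16_general r d
end
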